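/- In the GEW₁ model (uniform priors on all parameters), the full conditional posterior density of the Weibull shape parameter β is log-concave on (0, ∞). Precisely: for any fixed θ₁, θ₂, θ₃, θ₄ ∈ ℝ, writing A_i = exp(−θ₁ − θ₂/T_i − θ₃V_i − θ₄V_i/T_i), the function ℓ : (0,∞) → ℝ given by ℓ(b) = (Σ_{i=1}^k r_i)·ln b − Σ_{i=1}^k (n_i − r_i) T_i A_i τ_i^b − Σ_{i=1}^k Σ_{j=1}^{r_i} T_i A_i x_{ij}^b + (b − 1)·Σ_{i=1}^k Σ_{j=1}^{r_i} ln x_{ij} is concave on (0, ∞). -/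

import Mathlib

open Real Finset

/-! Termwise: `log` is concave, each `b ↦ a ^ b = exp (b log a)` with `a > 0` is convex and enters
with a nonpositive coefficient (as `r i ≤ n i` and `T i > 0`), and the last term is affine. -/

theorem ConvexOn.finset_sum {𝕜 E β ι : Type*} [Semiring 𝕜] [PartialOrder 𝕜]
    [AddCommMonoid E] [AddCommMonoid β] [PartialOrder β] [IsOrderedAddMonoid β]
    [SMul 𝕜 E] [Module 𝕜 β] {s : Set E} (hs : Convex 𝕜 s) {t : Finset ι} {f : ι → E → β}
    (hf : ∀ i ∈ t, ConvexOn 𝕜 s (f i)) : ConvexOn 𝕜 s fun x => ∑ i ∈ t, f i x := by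
  classical
  induction t using Finset.induction_on with
  | empty => simpa using convexOn_const 0 hs
  | insert a t ha ih =>
    simp only [Finset.sum_insert ha]
    exact (hf a (mem_insert_self a t)).add (ih fun i hi => hf i (mem_insert_of_mem hi))

theorem convexOn_const_mul_rpow_left_Ioi {a c : ℝ} (ha : 0 < a) (hc : 0 ≤ c) :
    ConvexOn ℝ (Set.Ioi (0 : ℝ)) fun b => c * a ^ b :=
  ((convexOn_rpow_left ha).subset (Set.subset_univ _) (convex_Ioi 0)).smul hc

theorem gew1_beta_logconcave
    (k : ℕ) (T V τ : Fin k → ℝ) (n r : Fin k → ℕ)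
    (x : (i : Fin k) → Fin (r i) → ℝ)
    (hT : ∀ i, 0 < T i) (hrn : ∀ i, r i ≤ n i)
    (hτ : ∀ i, 0 < τ i) (hx : ∀ i j, 0 < x i j)
    (θ₁ θ₂ θ₃ θ₄ : ℝ) :
    ConcaveOn ℝ (Set.Ioi (0 : ℝ)) (fun b : ℝ =>
      (∑ i, (r i : ℝ)) * Real.log b
      - ∑ i, ((n i : ℝ) - r i) * T i * Real.exp (-θ₁ - θ₂ / T i - θ₃ * V i - θ₄ * V i / T i) * τ i ^ b
      - ∑ i, ∑ j, T i * Real.exp (-θ₁ - θ₂ / T i - θ₃ * V i - θ₄ * V i / T i) * x i j ^ b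
      + (b - 1) * ∑ i, ∑ j, Real.log (x i j)) := by
  set A : Fin k → ℝ := fun i => T i * Real.exp (-θ₁ - θ₂ / T i - θ₃ * V i - θ₄ * V i / T i)
  have hA : ∀ i, 0 ≤ A i := fun i => (mul_pos (hT i) (exp_pos _)).le
  set L := ∑ i, ∑ j, Real.log (x i j)
  have hlog : ConcaveOn ℝ (Set.Ioi (0 : ℝ)) fun b => (∑ i, (r i : ℝ)) * log b :=
    strictConcaveOn_log_Ioi.concaveOn.smul (by positivity)
  have hcensored : ConvexOn ℝ (Set.Ioi (0 : ℝ)) fun b => ∑ i, ((n i : ℝ) - r i) * A i * τ i ^ b :=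
    ConvexOn.finset_sum (convex_Ioi 0) fun i _ => convexOn_const_mul_rpow_left_Ioi (hτ i)
      (mul_nonneg (sub_nonneg.2 (Nat.cast_le.2 (hrn i))) (hA i))
  have hfailed : ConvexOn ℝ (Set.Ioi (0 : ℝ)) fun b => ∑ i, ∑ j, A i * x i j ^ b :=
    ConvexOn.finset_sum (convex_Ioi 0) fun i _ => ConvexOn.finset_sum (convex_Ioi 0)
      fun j _ => convexOn_const_mul_rpow_left_Ioi (hx i j) (hA i)
  have haffine : ConcaveOn ℝ (Set.Ioi (0 : ℝ)) fun b => b * L + -L :=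
    ((LinearMap.mulRight ℝ L).concaveOn (convex_Ioi 0)).add_const (-L)
  refine (((hlog.sub hcensored).sub hfailed).add haffine).congr fun b _ => ?_
  simp only [Pi.add_apply, Pi.sub_apply, A, mul_assoc]
  ring
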